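/- arXiv:2303.17507 — 3 statements merged into one kernel-verified Lean document; each statement's English description precedes it below -/
import Mathlib

section
/- In ℂ² ⊗ ℂ³, the four product vectors (|0⟩+|1⟩)⊗(|0⟩+|1⟩+|2⟩), (|0⟩−|1⟩)⊗(|0⟩−|1⟩+|2⟩), |0⟩⊗|0⟩, |1⟩⊗|2⟩ are linearly independent and each is orthogonal to both entangled vectors |0⟩⊗|1⟩ − |1⟩⊗|0⟩ and |0⟩⊗|2⟩ − |1⟩⊗|1⟩; consequently these four product vectors span the orthogonal complement of the span of the two entangled vectors. -/
open scoped ComplexConjugate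

/-- The product (tensor) vector u ⊗ w in ℂ^{d₁} ⊗ ℂ^{d₂} ≅ ℂ^{d₁·d₂}. -/
noncomputable def tp {d₁ d₂ : ℕ} (u : EuclideanSpace ℂ (Fin d₁))
    (w : EuclideanSpace ℂ (Fin d₂)) : EuclideanSpace ℂ (Fin d₁ × Fin d₂) :=
  WithLp.toLp 2 (fun p => u p.1 * w p.2)

/-- Standard basis of ℂ². -/
noncomputable def b2 (i : Fin 2) : EuclideanSpace ℂ (Fin 2) := EuclideanSpace.single i 1
/-- Standard basis of ℂ³. -/
noncomputable def b3 (i : Fin 3) : EuclideanSpace ℂ (Fin 3) := EuclideanSpace.single i 1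

/-! Inner products of product vectors factor, ⟨u ⊗ w, u' ⊗ w'⟩ = ⟨u, u'⟩⟨w, w'⟩, which makes the
orthogonality relations a one-line computation in ℂ² and ℂ³. Both families are linearly independent,
and 4 + 2 = 6 = dim (ℂ² ⊗ ℂ³), so the span of the four product vectors, which lies in the orthogonal
complement of the two entangled vectors, has the dimension of that complement and fills it. -/

open Module Submodule

theorem span_range_eq_orthogonal_of_linearIndependent {𝕜 E ι : Type*} [RCLike 𝕜]
    [NormedAddCommGroup E] [InnerProductSpace 𝕜 E] [FiniteDimensional 𝕜 E] [Fintype ι]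
    {v : ι → E} (hv : LinearIndependent 𝕜 v) {K : Submodule 𝕜 E}
    (horth : span 𝕜 (Set.range v) ⟂ K) (hdim : Fintype.card ι + finrank 𝕜 K = finrank 𝕜 E) :
    span 𝕜 (Set.range v) = Kᗮ := by
  refine eq_of_le_of_finrank_eq (isOrtho_iff_le.mp horth) ?_
  have := K.finrank_add_finrank_orthogonal
  rw [finrank_span_eq_card hv]
  omega

theorem tp_apply {d₁ d₂ : ℕ} (u : EuclideanSpace ℂ (Fin d₁)) (w : EuclideanSpace ℂ (Fin d₂))
    (p : Fin d₁ × Fin d₂) : tp u w p = u p.1 * w p.2 := rfl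

theorem inner_tp {d₁ d₂ : ℕ} (u u' : EuclideanSpace ℂ (Fin d₁))
    (w w' : EuclideanSpace ℂ (Fin d₂)) :
    inner ℂ (tp u w) (tp u' w') = inner ℂ u u' * inner ℂ w w' := by
  simp only [PiLp.inner_apply, tp_apply, Fintype.sum_prod_type, Finset.sum_mul_sum, map_mul,
    RCLike.inner_apply]
  exact Finset.sum_congr rfl fun _ _ => Finset.sum_congr rfl fun _ _ => by ring

noncomputable def productVecs : Fin 4 → EuclideanSpace ℂ (Fin 2 × Fin 3) :=
  ![tp (b2 0 + b2 1) (b3 0 + b3 1 + b3 2),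
    tp (b2 0 - b2 1) (b3 0 - b3 1 + b3 2),
    tp (b2 0) (b3 0),
    tp (b2 1) (b3 2)]

noncomputable def entangled₁ : EuclideanSpace ℂ (Fin 2 × Fin 3) :=
  tp (b2 0) (b3 1) - tp (b2 1) (b3 0)

noncomputable def entangled₂ : EuclideanSpace ℂ (Fin 2 × Fin 3) :=
  tp (b2 0) (b3 2) - tp (b2 1) (b3 1)

theorem inner_productVecs_entangled₁ (i : Fin 4) : inner ℂ (productVecs i) entangled₁ = 0 := by
  fin_cases i <;>
    simp [productVecs, entangled₁, inner_tp, b2, b3, EuclideanSpace.inner_single_left]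

theorem inner_productVecs_entangled₂ (i : Fin 4) : inner ℂ (productVecs i) entangled₂ = 0 := by
  fin_cases i <;>
    simp [productVecs, entangled₂, inner_tp, b2, b3, EuclideanSpace.inner_single_left]

theorem linearIndependent_productVecs : LinearIndependent ℂ productVecs := by
  rw [Fintype.linearIndependent_iff]
  intro g hg
  have coord (p : Fin 2 × Fin 3) : ∑ j, g j * productVecs j p = 0 := by
    simpa using congr_arg (· p) hg
  have h00 : g 0 + g 1 + g 2 = 0 := by
    simpa [productVecs, tp_apply, b2, b3, Fin.sum_univ_four] using coord (0, 0)
  have h01 : g 0 - g 1 = 0 := by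
    simpa [productVecs, tp_apply, b2, b3, Fin.sum_univ_four, sub_eq_add_neg] using coord (0, 1)
  have h02 : g 0 + g 1 = 0 := by
    simpa [productVecs, tp_apply, b2, b3, Fin.sum_univ_four] using coord (0, 2)
  have h12 : g 0 - g 1 + g 3 = 0 := by
    simpa [productVecs, tp_apply, b2, b3, Fin.sum_univ_four, sub_eq_add_neg] using coord (1, 2)
  intro i
  fin_cases i
  · show g 0 = 0; linear_combination (h01 + h02) / 2
  · show g 1 = 0; linear_combination (h02 - h01) / 2
  · show g 2 = 0; linear_combination h00 - h02
  · show g 3 = 0; linear_combination h12 - h01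

theorem linearIndependent_entangled : LinearIndependent ℂ ![entangled₁, entangled₂] := by
  refine LinearIndependent.pair_iff.mpr fun s t hst => ⟨?_, ?_⟩
  · simpa [entangled₁, entangled₂, tp_apply, b2, b3] using congr_arg (· (0, 1)) hst
  · simpa [entangled₁, entangled₂, tp_apply, b2, b3] using congr_arg (· (0, 2)) hst

/-- in ℂ² ⊗ ℂ³ the four product vectors are linearly independent,
orthogonal to the two entangled vectors, and span the orthogonal complement of
the span of the two entangled vectors. -/
theorem stmt5 (v : Fin 4 → EuclideanSpace ℂ (Fin 2 × Fin 3))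
    (hv : v = ![tp (b2 0 + b2 1) (b3 0 + b3 1 + b3 2),
                tp (b2 0 - b2 1) (b3 0 - b3 1 + b3 2),
                tp (b2 0) (b3 0),
                tp (b2 1) (b3 2)])
    (ψ₁ ψ₂ : EuclideanSpace ℂ (Fin 2 × Fin 3))
    (hψ₁ : ψ₁ = tp (b2 0) (b3 1) - tp (b2 1) (b3 0))
    (hψ₂ : ψ₂ = tp (b2 0) (b3 2) - tp (b2 1) (b3 1)) :
    LinearIndependent ℂ v ∧
    (∀ i, inner ℂ (v i) ψ₁ = (0 : ℂ) ∧ inner ℂ (v i) ψ₂ = (0 : ℂ)) ∧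
    Submodule.span ℂ (Set.range v) = (Submodule.span ℂ {ψ₁, ψ₂})ᗮ := by
  obtain rfl : v = productVecs := hv
  obtain rfl : ψ₁ = entangled₁ := hψ₁
  obtain rfl : ψ₂ = entangled₂ := hψ₂
  have horth i := And.intro (inner_productVecs_entangled₁ i) (inner_productVecs_entangled₂ i)
  refine ⟨linearIndependent_productVecs, horth, ?_⟩
  refine span_range_eq_orthogonal_of_linearIndependent linearIndependent_productVecs ?_ ?_
  · rw [isOrtho_span]
    rintro _ ⟨i, rfl⟩ ψ (rfl | rfl)
    exacts [(horth i).1, (horth i).2]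
  · rw [← Matrix.range_cons_cons_empty _ _ ![], finrank_span_eq_card linearIndependent_entangled]
    simp [finrank_euclideanSpace]
end

section
/- In ℂ² ⊗ ℂ³, every nonzero vector in the span of |0⟩⊗|1⟩ − |1⟩⊗|0⟩ and |0⟩⊗|2⟩ − |1⟩⊗|1⟩ is entangled, i.e., is not of the form u ⊗ w for any u ∈ ℂ², w ∈ ℂ³. -/
open scoped ComplexConjugate

/-!
A vector of `ℂ² ⊗ ℂ³` is read as the `2 × 3` matrix of its coordinates; product vectors are
exactly the matrices of rank at most one, so all their `2 × 2` minors vanish. The vector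
`a ψ₁ + b ψ₂` has matrix `!![0, a, b; -a, -b, 0]`, whose minors on columns `{0, 1}` and `{1, 2}`
are `a²` and `b²`. Hence a product vector in the span forces `a = b = 0`.
-/

theorem tp_apply_mul_tp_apply {d₁ d₂ : ℕ} (u : EuclideanSpace ℂ (Fin d₁))
    (w : EuclideanSpace ℂ (Fin d₂)) (i k : Fin d₁) (j l : Fin d₂) :
    tp u w (i, j) * tp u w (k, l) = tp u w (i, l) * tp u w (k, j) := by
  simp only [tp, PiLp.toLp_apply]
  ring

theorem smul_add_smul_apply_eq_matrix (a b : ℂ) (p : Fin 2 × Fin 3) :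
    (a • (tp (b2 0) (b3 1) - tp (b2 1) (b3 0)) + b • (tp (b2 0) (b3 2) - tp (b2 1) (b3 1))) p
      = !![0, a, b; -a, -b, 0] p.1 p.2 := by
  obtain ⟨i, j⟩ := p
  fin_cases i <;> fin_cases j <;> simp [tp, b2, b3]

/-- every nonzero vector in the span of |0⟩⊗|1⟩ − |1⟩⊗|0⟩ and
|0⟩⊗|2⟩ − |1⟩⊗|1⟩ in ℂ² ⊗ ℂ³ is entangled (not a product vector). -/
theorem stmt6 (ψ₁ ψ₂ : EuclideanSpace ℂ (Fin 2 × Fin 3))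
    (hψ₁ : ψ₁ = tp (b2 0) (b3 1) - tp (b2 1) (b3 0))
    (hψ₂ : ψ₂ = tp (b2 0) (b3 2) - tp (b2 1) (b3 1)) :
    ∀ x ∈ Submodule.span ℂ ({ψ₁, ψ₂} : Set (EuclideanSpace ℂ (Fin 2 × Fin 3))), x ≠ 0 →
      ¬ ∃ (u : EuclideanSpace ℂ (Fin 2)) (w : EuclideanSpace ℂ (Fin 3)), x = tp u w := by
  rintro x hx hx0 ⟨u, w, rfl⟩
  obtain ⟨a, b, hab⟩ := Submodule.mem_span_pair.mp hx
  subst hψ₁ hψ₂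
  have hcoord (p : Fin 2 × Fin 3) : tp u w p = !![0, a, b; -a, -b, 0] p.1 p.2 := by
    rw [← hab, smul_add_smul_apply_eq_matrix]
  have ha : a = 0 := by simpa [hcoord] using tp_apply_mul_tp_apply u w 0 1 0 1
  have hb : b = 0 := by simpa [hcoord] using tp_apply_mul_tp_apply u w 0 1 1 2
  apply hx0
  rw [← hab, ha, hb]
  simp
end

section
/- Let ρ = Σᵢ pᵢ |uᵢ⊗wᵢ⟩⟨uᵢ⊗wᵢ| be a finite convex combination of rank-one projections onto unit product vectors in ℂ^{d₁} ⊗ ℂ^{d₂}. Then the partial transpose of ρ on the second factor is positive semidefinite (i.e., every separable state is PPT). -/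
open scoped ComplexConjugate ComplexOrder

/-- Partial transpose on the second tensor factor. -/
def ptrans {d₁ d₂ : ℕ} (X : Matrix (Fin d₁ × Fin d₂) (Fin d₁ × Fin d₂) ℂ) :
    Matrix (Fin d₁ × Fin d₂) (Fin d₁ × Fin d₂) ℂ :=
  Matrix.of fun p q => X (p.1, q.2) (q.1, p.2)

open Matrix

section PartialTranspose

variable {d₁ d₂ : ℕ}

lemma ptrans_smul (c : ℂ) (X : Matrix (Fin d₁ × Fin d₂) (Fin d₁ × Fin d₂) ℂ) :
    ptrans (c • X) = c • ptrans X :=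
  rfl

lemma ptrans_sum {ι : Type*} (s : Finset ι)
    (X : ι → Matrix (Fin d₁ × Fin d₂) (Fin d₁ × Fin d₂) ℂ) :
    ptrans (∑ i ∈ s, X i) = ∑ i ∈ s, ptrans (X i) := by
  ext p q
  simp only [ptrans, of_apply, Matrix.sum_apply]

/-- `(|u⊗w⟩⟨v⊗z|)^{T₂} = |u⊗z̄⟩⟨v⊗w̄|`. -/
lemma ptrans_vecMulVec_prod (u v : Fin d₁ → ℂ) (w z : Fin d₂ → ℂ) :
    ptrans (vecMulVec (fun p => u p.1 * w p.2) (star fun q => v q.1 * z q.2)) =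
      vecMulVec (fun p => u p.1 * star (z p.2)) (star fun q => v q.1 * star (w q.2)) := by
  ext p q
  simp only [ptrans, of_apply, vecMulVec_apply, Pi.star_apply, star_mul', star_star]
  ring

lemma ptrans_vecMulVec_prod_self_posSemidef (u : Fin d₁ → ℂ) (w : Fin d₂ → ℂ) :
    (ptrans (vecMulVec (fun p => u p.1 * w p.2) (star fun q => u q.1 * w q.2))).PosSemidef := by
  rw [ptrans_vecMulVec_prod]
  exact posSemidef_vecMulVec_self_star _

end PartialTranspose

theorem stmt12_general (d₁ d₂ m : ℕ) (p : Fin m → ℝ) (hp : ∀ i, 0 < p i)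
    (u : Fin m → EuclideanSpace ℂ (Fin d₁)) (w : Fin m → EuclideanSpace ℂ (Fin d₂))
    (ρ : Matrix (Fin d₁ × Fin d₂) (Fin d₁ × Fin d₂) ℂ)
    (hρ : ρ = ∑ i, ((p i : ℂ)) •
      Matrix.of (fun a b => tp (u i) (w i) a * conj (tp (u i) (w i) b))) :
    (ptrans ρ).PosSemidef := by
  have hprojector : ∀ i, Matrix.of (fun a b => tp (u i) (w i) a * conj (tp (u i) (w i) b)) =
      vecMulVec (fun a => u i a.1 * w i a.2) (star fun b => u i b.1 * w i b.2) := fun i => rfl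
  simp only [hρ, hprojector, ptrans_sum, ptrans_smul]
  refine posSemidef_sum _ fun i _ => (ptrans_vecMulVec_prod_self_posSemidef _ _).smul ?_
  exact_mod_cast (hp i).le

/-- every separable state is PPT: the partial transpose of a
finite convex combination of projections onto unit product vectors is
positive semidefinite. -/
theorem stmt12 (d₁ d₂ m : ℕ) (p : Fin m → ℝ) (hp : ∀ i, 0 < p i)
    (hpsum : ∑ i, p i = 1)
    (u : Fin m → EuclideanSpace ℂ (Fin d₁)) (w : Fin m → EuclideanSpace ℂ (Fin d₂))
    (hunit : ∀ i, ‖u i‖ = 1 ∧ ‖w i‖ = 1)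
    (ρ : Matrix (Fin d₁ × Fin d₂) (Fin d₁ × Fin d₂) ℂ)
    (hρ : ρ = ∑ i, ((p i : ℂ)) •
      Matrix.of (fun a b => tp (u i) (w i) a * conj (tp (u i) (w i) b))) :
    (ptrans ρ).PosSemidef :=
  stmt12_general d₁ d₂ m p hp u w ρ hρ
end
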